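/- Let G be a linearly ordered commutative group and X a set. Let f₁ : ι₁ → (X → G), f₂ : ι₂ → (X → G), g₁ : κ₁ → (X → G), g₂ : κ₂ → (X → G) be families indexed by finite nonempty types, with pointwise maxima F₁, F₂, G₁, G₂. Assume the pairs (f₁, f₂) and (g₁, g₂) are corner-integral (every corner root of fᵢ, resp. gᵢ, is a point where the maximum of the other family of the pair surpasses it: x ∈ Cor(f₁) ⇒ F₁(x) ≤ F₂(x), x ∈ Cor(f₂) ⇒ F₂(x) ≤ F₁(x), and similarly for g), and assume F₂ ≤ F₁ and G₂ ≤ G₁ pointwise (i.e. the represented fractions are ≥ 1). Then the pair consisting of the numerator family {f₁ᵢ · g₁ⱼ} indexed by ι₁ × κ₁ and the denominator family indexed by (ι₁ × κ₂) ⊕ (ι₂ × κ₁), sending (i, j) ↦ f₁ᵢ · g₂ⱼ and (i, j) ↦ f₂ᵢ · g₁ⱼ respectively, is corner-integral. (This is the representation of |f| ⊓ |g| = f·g/(f + g) for f = F₁/F₂ and g = G₁/G₂, so the meet of corner-integral elements is corner-integral.) -/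

import Mathlib

/-!
At a corner root of the numerator family `{f₁ᵢ · g₁ⱼ}` its maximum `F₁G₁` is attained by two
distinct pairs `(i, j) ≠ (i', j')`; by cancellativity each such pair attains both `F₁` and `G₁`,
so `x` is a corner root of `f₁` (if `i ≠ i'`) or of `g₁` (if `j ≠ j'`). Hence
`F₁G₁ ≤ F₂G₁` or `F₁G₁ ≤ F₁G₂`, and both are bounded by the denominator maximum
`F₁G₂ ⊔ F₂G₁`. Conversely `F₁G₂ ⊔ F₂G₁ ≤ F₁G₁` holds everywhere because `F₂ ≤ F₁`, `G₂ ≤ G₁`.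
-/

/-- `x` is a corner root of the family `f` if two distinct members agree at `x` and
dominate all other members there. -/
def IsCornerRoot {X A ι : Type*} [LinearOrder A] (f : ι → X → A) (x : X) : Prop :=
  ∃ i j : ι, i ≠ j ∧ f i x = f j x ∧ ∀ l : ι, f l x ≤ f i x

/-- The pointwise maximum of a finite nonempty family of functions. -/
def famSup {A X ι : Type*} [SemilatticeSup A] [Fintype ι] [Nonempty ι]
    (f : ι → X → A) (x : X) : A :=
  Finset.univ.sup' Finset.univ_nonempty fun i => f i x

section SemilatticeSup

variable {A X ι κ : Type*} [SemilatticeSup A] [Fintype ι] [Nonempty ι] [Fintype κ] [Nonempty κ]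

lemma le_famSup (f : ι → X → A) (x : X) (i : ι) : f i x ≤ famSup f x :=
  Finset.le_sup' (fun i => f i x) (Finset.mem_univ i)

lemma famSup_le_iff {f : ι → X → A} {x : X} {a : A} : famSup f x ≤ a ↔ ∀ i, f i x ≤ a := by
  simp [famSup]

lemma famSup_sumElim (f : ι → X → A) (g : κ → X → A) (x : X) :
    famSup (Sum.elim f g) x = famSup f x ⊔ famSup g x :=
  le_antisymm
    (famSup_le_iff.2 fun
      | .inl i => le_sup_of_le_left (le_famSup f x i)
      | .inr j => le_sup_of_le_right (le_famSup g x j))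
    (sup_le (famSup_le_iff.2 fun i => le_famSup (Sum.elim f g) x (.inl i))
      (famSup_le_iff.2 fun j => le_famSup (Sum.elim f g) x (.inr j)))

end SemilatticeSup

section LinearOrder

variable {A X ι κ : Type*} [LinearOrder A] [Fintype ι] [Nonempty ι] [Fintype κ] [Nonempty κ]

lemma exists_eq_famSup (f : ι → X → A) (x : X) : ∃ i, f i x = famSup f x := by
  obtain ⟨i, -, h⟩ := Finset.exists_mem_eq_sup' Finset.univ_nonempty fun i => f i x
  exact ⟨i, h.symm⟩

lemma isCornerRoot_iff_exists_eq_famSup {f : ι → X → A} {x : X} :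
    IsCornerRoot f x ↔ ∃ i j, i ≠ j ∧ f i x = famSup f x ∧ f j x = famSup f x := by
  constructor
  · rintro ⟨i, j, hij, hfij, hmax⟩
    have hi : f i x = famSup f x := le_antisymm (le_famSup f x i) (famSup_le_iff.2 hmax)
    exact ⟨i, j, hij, hi, hfij ▸ hi⟩
  · rintro ⟨i, j, hij, hi, hj⟩
    exact ⟨i, j, hij, hi.trans hj.symm, fun l => hi ▸ le_famSup f x l⟩

lemma famSup_mul [CommMonoid A] [IsOrderedMonoid A] (f : ι → X → A) (g : κ → X → A)
    (x : X) :
    famSup (fun p : ι × κ => fun y => f p.1 y * g p.2 y) x = famSup f x * famSup g x := by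
  refine le_antisymm
    (famSup_le_iff.2 fun p => mul_le_mul' (le_famSup f x p.1) (le_famSup g x p.2)) ?_
  obtain ⟨i, hi⟩ := exists_eq_famSup f x
  obtain ⟨j, hj⟩ := exists_eq_famSup g x
  rw [← hi, ← hj]
  exact le_famSup (fun p : ι × κ => fun y => f p.1 y * g p.2 y) x (i, j)

lemma IsCornerRoot.of_mul [CommMonoid A] [IsOrderedCancelMonoid A] {f : ι → X → A}
    {g : κ → X → A} {x : X} (h : IsCornerRoot (fun p : ι × κ => fun y => f p.1 y * g p.2 y) x) :
    IsCornerRoot f x ∨ IsCornerRoot g x := by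
  obtain ⟨⟨i, j⟩, ⟨i', j'⟩, hne, hij, hij'⟩ := isCornerRoot_iff_exists_eq_famSup.1 h
  rw [famSup_mul] at hij hij'
  obtain ⟨hi, hj⟩ := (mul_eq_mul_iff_eq_and_eq (le_famSup f x i) (le_famSup g x j)).1 hij
  obtain ⟨hi', hj'⟩ := (mul_eq_mul_iff_eq_and_eq (le_famSup f x i') (le_famSup g x j')).1 hij'
  by_cases hii' : i = i'
  · subst hii'
    exact .inr (isCornerRoot_iff_exists_eq_famSup.2
      ⟨j, j', fun hjj' => hne (by rw [hjj']), hj, hj'⟩)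
  · exact .inl (isCornerRoot_iff_exists_eq_famSup.2 ⟨i, i', hii', hi, hi'⟩)

end LinearOrder

theorem meet_of_corner_integral_is_corner_integral_general {A X : Type*}
    [CommGroup A] [LinearOrder A] [IsOrderedMonoid A]
    {ι₁ ι₂ κ₁ κ₂ : Type*} [Fintype ι₁] [Nonempty ι₁] [Fintype ι₂] [Nonempty ι₂]
    [Fintype κ₁] [Nonempty κ₁] [Fintype κ₂] [Nonempty κ₂]
    (f₁ : ι₁ → X → A) (f₂ : ι₂ → X → A) (g₁ : κ₁ → X → A) (g₂ : κ₂ → X → A)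
    (hf₁ : ∀ x : X, IsCornerRoot f₁ x → famSup f₁ x ≤ famSup f₂ x)
    (hg₁ : ∀ x : X, IsCornerRoot g₁ x → famSup g₁ x ≤ famSup g₂ x)
    (hF : ∀ x : X, famSup f₂ x ≤ famSup f₁ x)
    (hG : ∀ x : X, famSup g₂ x ≤ famSup g₁ x) :
    (∀ x : X,
        IsCornerRoot (fun p : ι₁ × κ₁ => fun y => f₁ p.1 y * g₁ p.2 y) x →
        famSup (fun p : ι₁ × κ₁ => fun y => f₁ p.1 y * g₁ p.2 y) x ≤
          famSup (Sum.elim (fun p : ι₁ × κ₂ => fun y => f₁ p.1 y * g₂ p.2 y)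
            (fun p : ι₂ × κ₁ => fun y => f₂ p.1 y * g₁ p.2 y)) x) ∧
    (∀ x : X,
        IsCornerRoot (Sum.elim (fun p : ι₁ × κ₂ => fun y => f₁ p.1 y * g₂ p.2 y)
            (fun p : ι₂ × κ₁ => fun y => f₂ p.1 y * g₁ p.2 y)) x →
        famSup (Sum.elim (fun p : ι₁ × κ₂ => fun y => f₁ p.1 y * g₂ p.2 y)
            (fun p : ι₂ × κ₁ => fun y => f₂ p.1 y * g₁ p.2 y)) x ≤
          famSup (fun p : ι₁ × κ₁ => fun y => f₁ p.1 y * g₁ p.2 y) x) := by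
  refine ⟨fun x hx => ?_, fun x _ => ?_⟩ <;> simp only [famSup_sumElim, famSup_mul]
  · rcases hx.of_mul with hf | hg
    · exact le_sup_of_le_right (mul_le_mul_left (hf₁ x hf) _)
    · exact le_sup_of_le_left (mul_le_mul_right (hg₁ x hg) _)
  · exact sup_le (mul_le_mul_right (hG x) _) (mul_le_mul_left (hF x) _)

/-- If the fractions `F₁/F₂` and `G₁/G₂` (given by monomial families `f₁, f₂` and
`g₁, g₂`) are corner-integral and `≥ 1`, then the representation of their meet
`|f| ⊓ |g| = f·g/(f + g)`, with numerator family `{f₁ᵢ · g₁ⱼ}` and denominator family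
`{f₁ᵢ · g₂ⱼ} ⊕ {f₂ᵢ · g₁ⱼ}`, is corner-integral. -/
theorem meet_of_corner_integral_is_corner_integral {A X : Type*}
    [CommGroup A] [LinearOrder A] [IsOrderedMonoid A]
    {ι₁ ι₂ κ₁ κ₂ : Type*} [Fintype ι₁] [Nonempty ι₁] [Fintype ι₂] [Nonempty ι₂]
    [Fintype κ₁] [Nonempty κ₁] [Fintype κ₂] [Nonempty κ₂]
    (f₁ : ι₁ → X → A) (f₂ : ι₂ → X → A) (g₁ : κ₁ → X → A) (g₂ : κ₂ → X → A)
    (hf₁ : ∀ x : X, IsCornerRoot f₁ x → famSup f₁ x ≤ famSup f₂ x)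
    (hf₂ : ∀ x : X, IsCornerRoot f₂ x → famSup f₂ x ≤ famSup f₁ x)
    (hg₁ : ∀ x : X, IsCornerRoot g₁ x → famSup g₁ x ≤ famSup g₂ x)
    (hg₂ : ∀ x : X, IsCornerRoot g₂ x → famSup g₂ x ≤ famSup g₁ x)
    (hF : ∀ x : X, famSup f₂ x ≤ famSup f₁ x)
    (hG : ∀ x : X, famSup g₂ x ≤ famSup g₁ x) :
    (∀ x : X,
        IsCornerRoot (fun p : ι₁ × κ₁ => fun y => f₁ p.1 y * g₁ p.2 y) x →
        famSup (fun p : ι₁ × κ₁ => fun y => f₁ p.1 y * g₁ p.2 y) x ≤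
          famSup (Sum.elim (fun p : ι₁ × κ₂ => fun y => f₁ p.1 y * g₂ p.2 y)
            (fun p : ι₂ × κ₁ => fun y => f₂ p.1 y * g₁ p.2 y)) x) ∧
    (∀ x : X,
        IsCornerRoot (Sum.elim (fun p : ι₁ × κ₂ => fun y => f₁ p.1 y * g₂ p.2 y)
            (fun p : ι₂ × κ₁ => fun y => f₂ p.1 y * g₁ p.2 y)) x →
        famSup (Sum.elim (fun p : ι₁ × κ₂ => fun y => f₁ p.1 y * g₂ p.2 y)
            (fun p : ι₂ × κ₁ => fun y => f₂ p.1 y * g₁ p.2 y)) x ≤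
          famSup (fun p : ι₁ × κ₁ => fun y => f₁ p.1 y * g₁ p.2 y) x) :=
  meet_of_corner_integral_is_corner_integral_general f₁ f₂ g₁ g₂ hf₁ hg₁ hF hG
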